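/- Let σ : ℝ^d → ℝ^{d×d} satisfy: σ(x)σ(x)ᵀ ≥ λ² I for all x (uniform positive definiteness), and ‖σ(x)‖_op ≤ M for all x. Fix 0 < C < λ and define σ̃(x) := √(σ(x)σ(x)ᵀ − C² I) (symmetric positive semidefinite square root). Then for all x, y ∈ ℝ^d, ‖σ̃(x) − σ̃(y)‖_HS ≤ (M/√(λ² − C²)) ‖σ(x) − σ(y)‖_HS. -/

import Mathlib

open Matrix

/-- Hilbert–Schmidt (Frobenius) norm of a real matrix. -/
noncomputable def frobNorm {d m : ℕ} (A : Matrix (Fin d) (Fin m) ℝ) : ℝ :=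
  Real.sqrt (∑ i, ∑ j, (A i j) ^ 2)

/-- Euclidean operator norm of a real matrix. -/
noncomputable def opNorm {d m : ℕ} (A : Matrix (Fin d) (Fin m) ℝ) : ℝ :=
  ‖(Matrix.toEuclideanLin A).toContinuousLinearMap‖

/-!
Put `α = √(λ² - C²)`. The hypotheses say `α² ≤ S²` and `α² ≤ T²` in the Loewner order, and since
`S, T ≥ 0` the spectral mapping theorem upgrades this to `α ≤ S` and `α ≤ T`. The difference
`E = S - T` solves the Sylvester equation `S E + E T = S² - T²`, so testing it against `E` in the
Hilbert–Schmidt inner product gives `2α ‖E‖² ≤ ⟪E, S² - T²⟫ ≤ ‖E‖ ‖S² - T²‖`. Finally the `C² I`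
terms cancel in `S² - T² = σ(x)(σ(x) - σ(y))ᵀ + (σ(x) - σ(y))σ(y)ᵀ`, whose Hilbert–Schmidt norm
is at most `2M ‖σ(x) - σ(y)‖` because `‖A B‖_HS ≤ ‖A‖_op ‖B‖_HS`.
-/

open scoped MatrixOrder

section LoewnerOrder

theorem algebraMap_le_of_algebraMap_sq_le_sq {A : Type*} [Ring A] [StarRing A] [PartialOrder A]
    [StarOrderedRing A] [TopologicalSpace A] [Algebra ℝ A]
    [ContinuousFunctionalCalculus ℝ A IsSelfAdjoint] [NonnegSpectrumClass ℝ A]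
    {a : A} (ha : 0 ≤ a) {r : ℝ} (hr : 0 ≤ r) (h : algebraMap ℝ A (r ^ 2) ≤ a ^ 2) :
    algebraMap ℝ A r ≤ a := by
  have : IsSelfAdjoint a := IsSelfAdjoint.of_nonneg ha
  rw [algebraMap_le_iff_le_spectrum] at h ⊢
  intro x hx
  have hx_sq : x ^ 2 ∈ spectrum ℝ (a ^ 2) := by
    rw [← cfc_pow_id (R := ℝ) a 2, cfc_map_spectrum (· ^ 2 : ℝ → ℝ) a]
    exact ⟨x, hx, rfl⟩
  exact (pow_le_pow_iff_left₀ hr (spectrum_nonneg_of_nonneg ha hx) two_ne_zero).mp (h _ hx_sq)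

variable {n 𝕜 : Type*} [Fintype n] [DecidableEq n]

theorem Matrix.smul_one_le_of_sq_smul_one_le_mul_self [RCLike 𝕜] {S : Matrix n n 𝕜} (hS : 0 ≤ S)
    {r : ℝ} (hr : 0 ≤ r) (h : r ^ 2 • (1 : Matrix n n 𝕜) ≤ S * S) : r • (1 : Matrix n n 𝕜) ≤ S := by
  rw [← Algebra.algebraMap_eq_smul_one] at h ⊢
  exact algebraMap_le_of_algebraMap_sq_le_sq hS hr (by rwa [sq S])

theorem Matrix.smul_one_le_of_forall_dotProduct_mulVec {A : Matrix n n ℝ} (hA : A.IsHermitian)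
    {r : ℝ} (h : ∀ v : n → ℝ, r * (v ⬝ᵥ v) ≤ A *ᵥ v ⬝ᵥ v) : r • (1 : Matrix n n ℝ) ≤ A := by
  refine PosSemidef.of_dotProduct_mulVec_nonneg
    (hA.sub (isHermitian_one.smul (.all r))) fun v => ?_
  simp only [star_trivial, sub_mulVec, smul_mulVec, one_mulVec, dotProduct_sub,
    dotProduct_smul, smul_eq_mul]
  rw [dotProduct_comm v (A *ᵥ v)]
  linarith [h v]

end LoewnerOrder

section Frobenius

variable {d m n : ℕ}

noncomputable def Matrix.flatL2 {ι κ : Type*} (A : Matrix ι κ ℝ) : EuclideanSpace ℝ (ι × κ) :=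
  WithLp.toLp 2 fun p => A p.1 p.2

theorem frobNorm_eq_norm_flatL2 (A : Matrix (Fin d) (Fin m) ℝ) : frobNorm A = ‖A.flatL2‖ := by
  simp [frobNorm, flatL2, EuclideanSpace.norm_eq, Fintype.sum_prod_type]

theorem trace_transpose_mul_eq_inner_flatL2 (A B : Matrix (Fin d) (Fin m) ℝ) :
    trace (Aᵀ * B) = inner ℝ A.flatL2 B.flatL2 := by
  simp only [trace, diag, mul_apply, transpose_apply, flatL2, PiLp.inner_apply,
    Fintype.sum_prod_type, RCLike.inner_apply, conj_trivial]
  rw [Finset.sum_comm]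
  simp_rw [mul_comm]

theorem frobNorm_nonneg (A : Matrix (Fin d) (Fin m) ℝ) : 0 ≤ frobNorm A :=
  Real.sqrt_nonneg _

theorem frobNorm_sq_eq_trace (A : Matrix (Fin d) (Fin m) ℝ) : frobNorm A ^ 2 = trace (Aᵀ * A) := by
  rw [trace_transpose_mul_eq_inner_flatL2, real_inner_self_eq_norm_sq, frobNorm_eq_norm_flatL2]

theorem trace_transpose_mul_le (A B : Matrix (Fin d) (Fin m) ℝ) :
    trace (Aᵀ * B) ≤ frobNorm A * frobNorm B := by
  rw [trace_transpose_mul_eq_inner_flatL2, frobNorm_eq_norm_flatL2, frobNorm_eq_norm_flatL2]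
  exact real_inner_le_norm _ _

theorem frobNorm_add_le (A B : Matrix (Fin d) (Fin m) ℝ) :
    frobNorm (A + B) ≤ frobNorm A + frobNorm B := by
  simp only [frobNorm_eq_norm_flatL2]
  exact norm_add_le A.flatL2 B.flatL2

theorem frobNorm_transpose (A : Matrix (Fin d) (Fin m) ℝ) : frobNorm Aᵀ = frobNorm A := by
  rw [frobNorm, frobNorm, Finset.sum_comm]
  rfl

theorem frobNorm_sq_eq_sum_norm_row (A : Matrix (Fin d) (Fin m) ℝ) :
    frobNorm A ^ 2 = ∑ i, ‖(WithLp.toLp 2 (A i) : EuclideanSpace ℝ (Fin m))‖ ^ 2 := by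
  simp [frobNorm_eq_norm_flatL2, flatL2, EuclideanSpace.norm_sq_eq, Fintype.sum_prod_type]

theorem norm_mulVec_le_opNorm (A : Matrix (Fin n) (Fin m) ℝ) (v : Fin m → ℝ) :
    ‖(WithLp.toLp 2 (A *ᵥ v) : EuclideanSpace ℝ (Fin n))‖ ≤
      opNorm A * ‖(WithLp.toLp 2 v : EuclideanSpace ℝ (Fin m))‖ :=
  (toEuclideanLin A).toContinuousLinearMap.le_opNorm (WithLp.toLp 2 v)

theorem frobNorm_mul_transpose_le (A : Matrix (Fin n) (Fin m) ℝ) (B : Matrix (Fin d) (Fin m) ℝ) :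
    frobNorm (B * Aᵀ) ≤ opNorm A * frobNorm B := by
  have hrow : ∀ i, (B * Aᵀ) i = A *ᵥ B i := fun i => by
    ext k; simp [mul_apply, mulVec, dotProduct, mul_comm]
  refine (pow_le_pow_iff_left₀ (frobNorm_nonneg _)
    (mul_nonneg (norm_nonneg _) (frobNorm_nonneg _)) two_ne_zero).mp ?_
  rw [mul_pow, frobNorm_sq_eq_sum_norm_row, frobNorm_sq_eq_sum_norm_row, Finset.mul_sum]
  refine Finset.sum_le_sum fun i _ => ?_
  rw [hrow, ← mul_pow]
  exact pow_le_pow_left₀ (norm_nonneg _) (norm_mulVec_le_opNorm A (B i)) 2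

theorem frobNorm_mul_le (A : Matrix (Fin n) (Fin m) ℝ) (B : Matrix (Fin m) (Fin d) ℝ) :
    frobNorm (A * B) ≤ opNorm A * frobNorm B := by
  have := frobNorm_mul_transpose_le A Bᵀ
  rwa [← transpose_mul, frobNorm_transpose, frobNorm_transpose] at this

end Frobenius

section Sylvester

variable {d m : ℕ}

theorem mul_frobNorm_sq_le_trace {S : Matrix (Fin d) (Fin d) ℝ} {r : ℝ}
    (hS : r • (1 : Matrix (Fin d) (Fin d) ℝ) ≤ S) (E : Matrix (Fin d) (Fin m) ℝ) :
    r * frobNorm E ^ 2 ≤ trace (Eᵀ * (S * E)) := by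
  have h := ((le_iff.mp hS).conjTranspose_mul_mul_same E).trace_nonneg
  simp only [conjTranspose_eq_transpose_of_trivial, Matrix.mul_sub, Matrix.sub_mul,
    Matrix.mul_smul, Matrix.mul_one, Matrix.smul_mul, trace_sub, trace_smul, smul_eq_mul,
    Matrix.mul_assoc] at h
  rw [frobNorm_sq_eq_trace]
  linarith

theorem two_mul_frobNorm_sub_le {S T : Matrix (Fin d) (Fin d) ℝ} {r : ℝ}
    (hS : r • (1 : Matrix (Fin d) (Fin d) ℝ) ≤ S) (hT : r • (1 : Matrix (Fin d) (Fin d) ℝ) ≤ T) :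
    2 * r * frobNorm (S - T) ≤ frobNorm (S * S - T * T) := by
  set E := S - T
  have hS_E := mul_frobNorm_sq_le_trace hS E
  have hT_E := mul_frobNorm_sq_le_trace hT Eᵀ
  rw [frobNorm_transpose, transpose_transpose, ← mul_assoc] at hT_E
  have hsplit : S * S - T * T = S * E + E * T := by simp only [E]; noncomm_ring
  have hlower : 2 * r * frobNorm E * frobNorm E ≤ frobNorm (S * S - T * T) * frobNorm E := by
    calc 2 * r * frobNorm E * frobNorm E ≤ trace (Eᵀ * (S * S - T * T)) := by
          rw [hsplit, mul_add, trace_add, trace_mul_comm Eᵀ (E * T)]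
          linarith
      _ ≤ frobNorm E * frobNorm (S * S - T * T) := trace_transpose_mul_le _ _
      _ = frobNorm (S * S - T * T) * frobNorm E := mul_comm _ _
  rcases (frobNorm_nonneg E).eq_or_lt with hE | hE
  · rw [← hE, mul_zero]
    exact frobNorm_nonneg _
  · exact le_of_mul_le_mul_right hlower hE

theorem frobNorm_mul_transpose_sub_le {A B : Matrix (Fin d) (Fin m) ℝ} {M : ℝ}
    (hA : opNorm A ≤ M) (hB : opNorm B ≤ M) :
    frobNorm (A * Aᵀ - B * Bᵀ) ≤ 2 * M * frobNorm (A - B) := by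
  have hsplit : A * Aᵀ - B * Bᵀ = A * (A - B)ᵀ + (A - B) * Bᵀ := by
    simp only [transpose_sub, Matrix.mul_sub, Matrix.sub_mul]; abel
  have hfirst : frobNorm (A * (A - B)ᵀ) ≤ opNorm A * frobNorm (A - B) :=
    (frobNorm_mul_le A (A - B)ᵀ).trans_eq (by rw [frobNorm_transpose])
  have hsecond := frobNorm_mul_transpose_le B (A - B)
  rw [hsplit]
  refine (frobNorm_add_le _ _).trans ?_
  nlinarith [frobNorm_nonneg (A - B)]

end Sylvester

/-- Diffusion splitting lemma estimate: if `σ(x)σ(x)ᵀ ≥ λ² I` uniformly and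
`‖σ(x)‖_op ≤ M`, then for `0 < C < λ` the modified coefficient
`σ̃(x) = √(σ(x)σ(x)ᵀ - C² I)` (the symmetric positive semidefinite square root,
here represented by any positive semidefinite `S`, `T` with `S S = σ(x)σ(x)ᵀ - C² I`,
`T T = σ(y)σ(y)ᵀ - C² I`) satisfies
`‖σ̃(x) - σ̃(y)‖_HS ≤ (M/√(λ² - C²)) ‖σ(x) - σ(y)‖_HS`. -/
theorem diffusion_splitting_lipschitz
    {d : ℕ} (σ : (Fin d → ℝ) → Matrix (Fin d) (Fin d) ℝ)
    (lam M C : ℝ) (hC : 0 < C) (hClam : C < lam)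
    (hunif : ∀ x : Fin d → ℝ, ∀ h : Fin d → ℝ,
      lam ^ 2 * (h ⬝ᵥ h) ≤ (σ x * (σ x)ᵀ).mulVec h ⬝ᵥ h)
    (hbound : ∀ x : Fin d → ℝ, opNorm (σ x) ≤ M)
    (x y : Fin d → ℝ) (S T : Matrix (Fin d) (Fin d) ℝ)
    (hS : S.PosSemidef) (hT : T.PosSemidef)
    (hSsq : S * S = σ x * (σ x)ᵀ - C ^ 2 • (1 : Matrix (Fin d) (Fin d) ℝ))
    (hTsq : T * T = σ y * (σ y)ᵀ - C ^ 2 • (1 : Matrix (Fin d) (Fin d) ℝ)) :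
    frobNorm (S - T) ≤ M / Real.sqrt (lam ^ 2 - C ^ 2) * frobNorm (σ x - σ y) := by
  have hgap : 0 < lam ^ 2 - C ^ 2 := by nlinarith
  set α := Real.sqrt (lam ^ 2 - C ^ 2)
  have hα : 0 < α := Real.sqrt_pos.mpr hgap
  have hcoef (z : Fin d → ℝ) : α ^ 2 • (1 : Matrix (Fin d) (Fin d) ℝ) ≤
      σ z * (σ z)ᵀ - C ^ 2 • (1 : Matrix (Fin d) (Fin d) ℝ) := by
    have hσ : (σ z * (σ z)ᵀ).IsHermitian := by
      simpa only [conjTranspose_eq_transpose_of_trivial] using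
        isHermitian_mul_conjTranspose_self (σ z)
    rw [Real.sq_sqrt hgap.le, sub_smul]
    exact sub_le_sub_right (smul_one_le_of_forall_dotProduct_mulVec hσ (hunif z)) _
  have hS_ge := smul_one_le_of_sq_smul_one_le_mul_self (nonneg_iff_posSemidef.2 hS) hα.le
    (hSsq ▸ hcoef x)
  have hT_ge := smul_one_le_of_sq_smul_one_le_mul_self (nonneg_iff_posSemidef.2 hT) hα.le
    (hTsq ▸ hcoef y)
  have key : 2 * α * frobNorm (S - T) ≤ 2 * M * frobNorm (σ x - σ y) :=
    calc 2 * α * frobNorm (S - T)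
        ≤ frobNorm (S * S - T * T) := two_mul_frobNorm_sub_le hS_ge hT_ge
      _ = frobNorm (σ x * (σ x)ᵀ - σ y * (σ y)ᵀ) := by rw [hSsq, hTsq, sub_sub_sub_cancel_right]
      _ ≤ 2 * M * frobNorm (σ x - σ y) := frobNorm_mul_transpose_sub_le (hbound x) (hbound y)
  rw [div_mul_eq_mul_div, le_div_iff₀ hα]
  linarith
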